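/- arXiv:2310.12331 — 3 statements merged into one kernel-verified Lean document; each statement's English description precedes it below -/
import Mathlib

section
/- The free Lie algebra on a set is residually nilpotent: the intersection of the terms of the lower central series of the free Lie algebra over a field on any type of generators is zero. -/
/-!
Marking every generator with a formal variable, `x ↦ X ⊗ x`, defines a Lie algebra map `Φ`
from the free Lie algebra `L` to `R[X] ⊗ L`. Brackets in `R[X] ⊗ L` multiply the polynomial
parts, so `Φ` sends the `n`-th term of the lower central series into `X ^ (n + 1) • (R[X] ⊗ L)`.
Evaluating at `X = 1` undoes `Φ`, and an element of `R[X] ⊗ L` divisible by every power of `X`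
is zero.
-/

open Polynomial TensorProduct

noncomputable section

theorem TensorProduct.eq_zero_of_forall_X_pow_succ_smul_eq {R M : Type*} [CommRing R]
    [AddCommGroup M] [Module R M] {v : R[X] ⊗[R] M}
    (h : ∀ n : ℕ, ∃ w, (X ^ (n + 1) : R[X]) • w = v) : v = 0 := by
  let e := PolynomialModule.polynomialTensorProductLEquivPolynomialModule R M
  rw [← e.map_eq_zero_iff, ← PolynomialModule.coeff_eq_zero]
  ext n
  obtain ⟨w, rfl⟩ := h n
  rw [map_smul, ← monomial_one_right_eq_X_pow, PolynomialModule.monomial_smul_apply,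
    if_neg (by omega), Finsupp.coe_zero, Pi.zero_apply]

namespace LieAlgebra.ExtendScalars

variable (R L : Type*) [CommRing R] [LieRing L] [LieAlgebra R L]

def lid : R ⊗[R] L ≃ₗ⁅R⁆ L :=
  { TensorProduct.lid R L with
    map_lie' {u v} := by
      induction u using TensorProduct.induction_on with
      | zero => simp
      | add a b ha hb => simp_all [add_lie]
      | tmul r x =>
        induction v using TensorProduct.induction_on with
        | zero => simp
        | add a b ha hb => simp_all [lie_add]
        | tmul s y => simp [bracket_tmul, mul_smul, smul_lie, lie_smul, smul_comm r s] }

def polynomialEval (r : R) : R[X] ⊗[R] L →ₗ⁅R⁆ L :=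
  (lid R L).toLieHom.comp (map (aeval r) LieHom.id)

variable {L}

theorem polynomialEval_tmul (r : R) (p : R[X]) (x : L) :
    polynomialEval R L r (p ⊗ₜ x) = p.eval r • x :=
  rfl

def xPowIdeal (m : ℕ) : LieIdeal R (R[X] ⊗[R] L) where
  carrier := {v | ∃ w, (X ^ m : R[X]) • w = v}
  zero_mem' := ⟨0, smul_zero _⟩
  add_mem' := by
    rintro _ _ ⟨u, rfl⟩ ⟨v, rfl⟩
    exact ⟨u + v, smul_add _ _ _⟩
  smul_mem' := by
    rintro r _ ⟨v, rfl⟩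
    exact ⟨r • v, smul_comm _ _ _⟩
  lie_mem := by
    rintro u _ ⟨v, rfl⟩
    exact ⟨⁅u, v⁆, (lie_smul (X ^ m : R[X]) u v).symm⟩

variable {R}

theorem lie_mem_xPowIdeal_add {a b : ℕ} {u v : R[X] ⊗[R] L} (hu : u ∈ xPowIdeal R a)
    (hv : v ∈ xPowIdeal R b) : ⁅u, v⁆ ∈ xPowIdeal R (a + b) := by
  obtain ⟨u, rfl⟩ := hu
  obtain ⟨v, rfl⟩ := hv
  -- Without the explicit scalar, `rw` fails to match the bracket instance of the tensor product.
  exact ⟨⁅u, v⁆, by rw [pow_add, mul_smul, ← lie_smul (X ^ b : R[X]) u v, ← smul_lie]⟩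

end LieAlgebra.ExtendScalars

namespace FreeLieAlgebra

open LieAlgebra.ExtendScalars

variable (R σ : Type*) [CommRing R]

def scaleByXCodRestrict : FreeLieAlgebra R σ →ₗ⁅R⁆
    LieIdeal.toLieSubalgebra R (R[X] ⊗[R] FreeLieAlgebra R σ) (xPowIdeal R 1) :=
  lift R fun x => ⟨(X : R[X]) ⊗ₜ of R x,
    ⟨1 ⊗ₜ of R x, by rw [smul_tmul', smul_eq_mul, pow_one, mul_one]⟩⟩

def scaleByX : FreeLieAlgebra R σ →ₗ⁅R⁆ R[X] ⊗[R] FreeLieAlgebra R σ :=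
  (LieIdeal.toLieSubalgebra R _ (xPowIdeal R 1)).incl.comp (scaleByXCodRestrict R σ)

theorem scaleByX_of (x : σ) : scaleByX R σ (of R x) = (X : R[X]) ⊗ₜ of R x := by
  simp [scaleByX, scaleByXCodRestrict]

theorem scaleByX_mem_xPowIdeal_one (x : FreeLieAlgebra R σ) :
    scaleByX R σ x ∈ xPowIdeal R 1 :=
  (scaleByXCodRestrict R σ x).2

theorem lowerCentralSeries_le_comap_scaleByX (n : ℕ) :
    LieModule.lowerCentralSeries R (FreeLieAlgebra R σ) (FreeLieAlgebra R σ) n ≤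
      (xPowIdeal R (n + 1)).comap (scaleByX R σ) := by
  induction n with
  | zero => exact fun x _ => scaleByX_mem_xPowIdeal_one R σ x
  | succ n ih =>
    rw [LieModule.lowerCentralSeries_succ, LieSubmodule.lie_le_iff]
    intro x _ y hy
    rw [LieIdeal.mem_comap, LieHom.map_lie, add_comm (n + 1) 1]
    exact lie_mem_xPowIdeal_add (scaleByX_mem_xPowIdeal_one R σ x) (ih hy)

theorem polynomialEval_one_comp_scaleByX :
    (polynomialEval R (FreeLieAlgebra R σ) 1).comp (scaleByX R σ) = LieHom.id :=
  hom_ext fun x => by simp [scaleByX_of, polynomialEval_tmul]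

theorem scaleByX_injective : Function.Injective (scaleByX R σ) :=
  Function.LeftInverse.injective (g := polynomialEval R _ 1)
    (LieHom.congr_fun (polynomialEval_one_comp_scaleByX R σ))

end FreeLieAlgebra

end

/-- The free Lie algebra on any type of generators over a field is residually
nilpotent: the intersection of the terms of its lower central series is zero. -/
theorem freeLieAlgebra_residually_nilpotent
    (K : Type) [Field K] (X : Type) :
    ⨅ n : ℕ, LieModule.lowerCentralSeries K (FreeLieAlgebra K X) (FreeLieAlgebra K X) n
      = ⊥ := by
  refine (LieSubmodule.eq_bot_iff _).2 fun x hx => ?_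
  rw [LieSubmodule.mem_iInf] at hx
  have h : FreeLieAlgebra.scaleByX K X x = 0 :=
    TensorProduct.eq_zero_of_forall_X_pow_succ_smul_eq
      fun n => FreeLieAlgebra.lowerCentralSeries_le_comap_scaleByX K X n (hx n)
  exact (injective_iff_map_eq_zero _).1 (FreeLieAlgebra.scaleByX_injective K X) x h
end

section
/- For letters a > b and distinct positive integers i ≠ j, the words wᵢ = a·a·bⁱ·a·b and wⱼ = a·a·bʲ·a·b have no overlap: wᵢ is not a factor (contiguous subword) of wⱼ, and no nonempty proper suffix of wᵢ equals a prefix of wⱼ (nor vice versa). -/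
/-!
The letter `1` occurs in `wᵢ` exactly at the positions `0`, `1` and `i + 2`. An occurrence of `wᵢ`
inside `wⱼ` must therefore send the adjacent pair of `1`s to positions `0, 1` of `wⱼ`, and then its
third `1` forces `i = j`. A proper suffix of `wᵢ` beginning with `1` starts at position `1` or
`i + 2`, so for `i ≥ 1` its second letter is `0` (or missing), while `wⱼ` begins with `11`.
-/

/-- The word `wᵢ = a·a·bⁱ·a·b` over the alphabet `{a, b}` (encoded as `Fin 2`, with
`a = 1 > b = 0`). -/
def lyndonWordW (i : ℕ) : List (Fin 2) :=
  [1, 1] ++ List.replicate i 0 ++ [1, 0]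

theorem lyndonWordW_length (i : ℕ) : (lyndonWordW i).length = i + 4 := by
  simp [lyndonWordW]

theorem lyndonWordW_getElem?_eq_some_one_iff (i n : ℕ) :
    (lyndonWordW i)[n]? = some 1 ↔ n = 0 ∨ n = 1 ∨ n = i + 2 := by
  rcases n with _ | _ | n
  · simp [lyndonWordW]
  · simp [lyndonWordW]
  · simp only [lyndonWordW, List.cons_append, List.nil_append, List.getElem?_cons_succ,
      List.getElem?_append, List.getElem?_replicate, List.length_replicate]
    rcases Nat.lt_or_ge n i with h | h
    · simp [h]
      omega
    · obtain ⟨d, rfl⟩ := Nat.exists_eq_add_of_le h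
      rcases d with _ | _ | d <;> simp

theorem lyndonWordW_eq_of_isInfix {i j : ℕ} (h : lyndonWordW i <:+: lyndonWordW j) :
    i = j := by
  obtain ⟨k, hlen, hk⟩ := List.infix_iff_getElem?.mp h
  have shift (m : ℕ) (hm : m = 0 ∨ m = 1 ∨ m = i + 2) :
      m + k = 0 ∨ m + k = 1 ∨ m + k = j + 2 := by
    have hwi := (lyndonWordW_getElem?_eq_some_one_iff i m).mpr hm
    obtain ⟨hm, hwi⟩ := List.getElem?_eq_some_iff.mp hwi
    rw [← lyndonWordW_getElem?_eq_some_one_iff, hk m hm, hwi]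
  have h0 := shift 0 (by omega)
  have h1 := shift 1 (by omega)
  have h2 := shift (i + 2) (by omega)
  rw [lyndonWordW_length, lyndonWordW_length] at hlen
  omega

theorem lyndonWordW_not_isPrefix_of_isSuffix {i j : ℕ} (hi : 1 ≤ i) {s : List (Fin 2)}
    (hs : s ≠ []) (hsi : s ≠ lyndonWordW i) (hsuf : s <:+ lyndonWordW i) :
    ¬ s <+: lyndonWordW j := by
  intro hpre
  have hlen : s.length < i + 4 := by
    rw [← lyndonWordW_length]
    exact lt_of_le_of_ne hsuf.length_le fun h => hsi (hsuf.eq_of_length h)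
  have hpos : 0 < s.length := List.length_pos_iff.mpr hs
  obtain ⟨-, hsuf⟩ := List.suffix_iff_getElem?.mp hsuf
  rw [lyndonWordW_length] at hsuf
  have shift (m : ℕ) (hms : m < s.length) (hm : m = 0 ∨ m = 1) :
      m + (i + 4 - s.length) = 0 ∨ m + (i + 4 - s.length) = 1 ∨
        m + (i + 4 - s.length) = i + 2 := by
    rw [← lyndonWordW_getElem?_eq_some_one_iff, ← Nat.add_sub_assoc hlen.le, hsuf m hms,
      ← List.prefix_iff_getElem?.mp hpre m hms, lyndonWordW_getElem?_eq_some_one_iff]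
    omega
  have h0 := shift 0 hpos (by omega)
  have h1 : 1 < s.length → _ := fun h => shift 1 h (by omega)
  omega

/-- For distinct positive integers `i ≠ j` the words `wᵢ` and `wⱼ` have no overlap:
neither is a factor (contiguous subword) of the other, and no nonempty proper suffix
of one of them equals a prefix of the other. -/
theorem lyndonWordW_no_overlap (i j : ℕ) (hi : 1 ≤ i) (hj : 1 ≤ j) (hij : i ≠ j) :
    (¬ lyndonWordW i <:+: lyndonWordW j) ∧ (¬ lyndonWordW j <:+: lyndonWordW i) ∧
    (∀ s : List (Fin 2), s ≠ [] → s ≠ lyndonWordW i → s <:+ lyndonWordW i →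
        ¬ s <+: lyndonWordW j) ∧
    (∀ s : List (Fin 2), s ≠ [] → s ≠ lyndonWordW j → s <:+ lyndonWordW j →
        ¬ s <+: lyndonWordW i) :=
  ⟨fun h => hij (lyndonWordW_eq_of_isInfix h), fun h => hij (lyndonWordW_eq_of_isInfix h).symm,
    fun _ => lyndonWordW_not_isPrefix_of_isSuffix hi,
    fun _ => lyndonWordW_not_isPrefix_of_isSuffix hj⟩
end

section
/- Let F be the free Lie algebra over a field K on generators a and b. The elements wᵢ = [[a,[a,b,…,b]],[a,b]] (with i copies of b in the inner iterated bracket), for i ≥ 1, are linearly independent in F. -/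
open MonoidAlgebra

attribute [local instance] LieRing.ofAssociativeRing

/-- The left-normed iterated bracket `[a, b, …, b]` with `n` copies of `b`, in the
free Lie algebra on two generators `a = of true` and `b = of false`. -/
noncomputable def innerBracket (K : Type) [Field K] : ℕ → FreeLieAlgebra K Bool
  | 0 => FreeLieAlgebra.of K true
  | n + 1 => ⁅innerBracket K n, FreeLieAlgebra.of K false⁆

namespace WiAux


variable (K : Type) [Field K]

noncomputable abbrev XX : MonoidAlgebra K (FreeMonoid Bool) := single (FreeMonoid.of true) 1
noncomputable abbrev YY : MonoidAlgebra K (FreeMonoid Bool) := single (FreeMonoid.of false) 1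

noncomputable def φ : FreeLieAlgebra K Bool →ₗ⁅K⁆ MonoidAlgebra K (FreeMonoid Bool) :=
  FreeLieAlgebra.lift K (fun t => if t then XX K else YY K)

lemma φ_true : φ K (FreeLieAlgebra.of K true) = XX K := by
  simp [φ, FreeLieAlgebra.lift_of_apply]

lemma φ_false : φ K (FreeLieAlgebra.of K false) = YY K := by
  simp [φ, FreeLieAlgebra.lift_of_apply]

-- word helpers
lemma cancel_right (x : Bool) (l : List Bool) (a : FreeMonoid Bool) :
    a * FreeMonoid.of x = FreeMonoid.ofList (l ++ [x]) ↔ a = FreeMonoid.ofList l := by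
  constructor
  · intro h
    have := congrArg FreeMonoid.toList h
    simp only [FreeMonoid.toList_mul, FreeMonoid.toList_of, FreeMonoid.toList_ofList] at this
    exact congrArg FreeMonoid.ofList (List.append_cancel_right this)
  · rintro rfl; rfl

lemma no_right (x : Bool) (l : List Bool) (h : l.getLast? ≠ some x) :
    ¬∃ d, FreeMonoid.ofList l = d * FreeMonoid.of x := by
  rintro ⟨d, hd⟩
  have := congrArg FreeMonoid.toList hd
  simp only [FreeMonoid.toList_mul, FreeMonoid.toList_of, FreeMonoid.toList_ofList] at this
  exact h (by rw [this, List.getLast?_concat])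

lemma cancel_left (x : Bool) (l : List Bool) (a : FreeMonoid Bool) :
    FreeMonoid.of x * a = FreeMonoid.ofList (x :: l) ↔ a = FreeMonoid.ofList l := by
  constructor
  · intro h
    have := congrArg FreeMonoid.toList h
    simp only [FreeMonoid.toList_mul, FreeMonoid.toList_of, FreeMonoid.toList_ofList,
      List.singleton_append, List.cons.injEq] at this
    exact congrArg FreeMonoid.ofList this.2
  · rintro rfl; rfl

lemma no_left (x : Bool) (l : List Bool) (h : l.head? ≠ some x) :
    ¬∃ d, FreeMonoid.ofList l = FreeMonoid.of x * d := by
  rintro ⟨d, hd⟩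
  have := congrArg FreeMonoid.toList hd
  simp only [FreeMonoid.toList_mul, FreeMonoid.toList_of, FreeMonoid.toList_ofList,
    List.singleton_append] at this
  exact h (by rw [this]; rfl)

lemma φ_inner_succ (n : ℕ) :
    φ K (innerBracket K (n + 1)) =
      φ K (innerBracket K n) * YY K - YY K * φ K (innerBracket K n) := by
  show φ K ⁅innerBracket K n, FreeLieAlgebra.of K false⁆ = _
  rw [LieHom.map_lie, φ_false, Ring.lie_def]

lemma coeff_inner (n : ℕ) :
    (φ K (innerBracket K n)).coeff (FreeMonoid.ofList (true :: List.replicate n false)) = 1 := by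
  induction n with
  | zero =>
    rw [show innerBracket K 0 = FreeLieAlgebra.of K true from rfl, φ_true]
    exact Finsupp.single_eq_same
  | succ n ih =>
    rw [φ_inner_succ, MonoidAlgebra.coeff_sub, Finsupp.sub_apply]
    have hl : (true :: List.replicate (n + 1) false)
        = (true :: List.replicate n false) ++ [false] := by
      rw [List.replicate_succ']; simp
    have h1 : (φ K (innerBracket K n) * YY K).coeff
        (FreeMonoid.ofList (true :: List.replicate (n + 1) false)) = 1 := by
      rw [hl, MonoidAlgebra.coeff_mul_single_eq_coeff_mul _ (fun a _ => cancel_right false _ a), ih, mul_one]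
    have h2 : (YY K * φ K (innerBracket K n)).coeff
        (FreeMonoid.ofList (true :: List.replicate (n + 1) false)) = 0 :=
      MonoidAlgebra.single_mul_apply_of_not_exists_mul _ _ (no_left false _ (by simp))
    rw [h1, h2, sub_zero]

-- support length predicate
def lenOK (f : MonoidAlgebra K (FreeMonoid Bool)) (p : ℕ) : Prop :=
  ∀ w ∈ f.coeff.support, (FreeMonoid.toList w).length = p

lemma lenOK_mul {f g : MonoidAlgebra K (FreeMonoid Bool)} {p q : ℕ}
    (hf : lenOK K f p) (hg : lenOK K g q) : lenOK K (f * g) (p + q) := by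
  classical
  intro w hw
  have h := MonoidAlgebra.support_coeff_mul_subset f g hw
  rw [Finset.mem_mul] at h
  obtain ⟨a, ha, b, hb, rfl⟩ := h
  rw [FreeMonoid.toList_mul, List.length_append, hf a ha, hg b hb]

lemma lenOK_sub {f g : MonoidAlgebra K (FreeMonoid Bool)} {p : ℕ}
    (hf : lenOK K f p) (hg : lenOK K g p) : lenOK K (f - g) p := by
  classical
  intro w hw
  have h := Finsupp.support_sub (f := f.coeff) (g := g.coeff) hw
  rw [Finset.mem_union] at h
  rcases h with h | h
  · exact hf w h
  · exact hg w h

lemma lenOK_lie {f g : MonoidAlgebra K (FreeMonoid Bool)} {p q : ℕ}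
    (hf : lenOK K f p) (hg : lenOK K g q) : lenOK K ⁅f, g⁆ (p + q) := by
  rw [Ring.lie_def]
  refine lenOK_sub K (lenOK_mul K hf hg) ?_
  rw [add_comm]
  exact lenOK_mul K hg hf

lemma lenOK_X : lenOK K (XX K) 1 := by
  intro w hw
  have := Finsupp.support_single_subset hw
  rw [Finset.mem_singleton] at this
  subst this; rfl

lemma lenOK_Y : lenOK K (YY K) 1 := by
  intro w hw
  have := Finsupp.support_single_subset hw
  rw [Finset.mem_singleton] at this
  subst this; rfl

lemma lenOK_inner (n : ℕ) : lenOK K (φ K (innerBracket K n)) (n + 1) := by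
  induction n with
  | zero => rw [show innerBracket K 0 = FreeLieAlgebra.of K true from rfl, φ_true]; exact lenOK_X K
  | succ n ih =>
    rw [φ_inner_succ]
    refine lenOK_sub K (lenOK_mul K ih (lenOK_Y K)) ?_
    have : n + 1 + 1 = 1 + (n + 1) := by omega
    rw [this]
    exact lenOK_mul K (lenOK_Y K) ih

noncomputable def v (i : ℕ) : MonoidAlgebra K (FreeMonoid Bool) :=
  φ K ⁅⁅FreeLieAlgebra.of K true, innerBracket K (i + 1)⁆,
      ⁅FreeLieAlgebra.of K true, FreeLieAlgebra.of K false⁆⁆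

lemma v_eq (i : ℕ) :
    v K i = ⁅⁅XX K, φ K (innerBracket K (i + 1))⁆, ⁅XX K, YY K⁆⁆ := by
  rw [v, LieHom.map_lie, LieHom.map_lie, LieHom.map_lie, φ_true, φ_false]

lemma lenOK_v (i : ℕ) : lenOK K (v K i) (i + 5) := by
  rw [v_eq]
  have h := lenOK_lie K (lenOK_lie K (lenOK_X K) (lenOK_inner K (i + 1)))
    (lenOK_lie K (lenOK_X K) (lenOK_Y K))
  have he : 1 + (i + 1 + 1) + (1 + 1) = i + 5 := by omega
  rwa [he] at h

def Ltar (i : ℕ) : List Bool := true :: true :: (List.replicate (i + 1) false ++ [true, false])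

lemma Ltar_length (i : ℕ) : (Ltar i).length = i + 5 := by simp [Ltar]

lemma coeff_v_self (i : ℕ) : (v K i).coeff (FreeMonoid.ofList (Ltar i)) = 1 := by
  set n := i + 1 with hn
  set C := φ K (innerBracket K n) with hC
  have hvu : v K i = (XX K * C - C * XX K) * (XX K * YY K - YY K * XX K)
      - (XX K * YY K - YY K * XX K) * (XX K * C - C * XX K) := by
    rw [v_eq, Ring.lie_def, Ring.lie_def, Ring.lie_def]
  set u : MonoidAlgebra K (FreeMonoid Bool) := XX K * C - C * XX K with hu
  have hL2 : Ltar i = (true :: true :: (List.replicate n false ++ [true])) ++ [false] := by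
    simp [Ltar, hn]
  have hL1 : (true :: true :: (List.replicate n false ++ [true]))
      = (true :: true :: List.replicate n false) ++ [true] := by simp
  have hA : (u * (XX K * YY K - YY K * XX K)).coeff (FreeMonoid.ofList (Ltar i))
      = u.coeff (FreeMonoid.ofList (true :: true :: List.replicate n false)) := by
    rw [mul_sub, ← mul_assoc, ← mul_assoc, MonoidAlgebra.coeff_sub, Finsupp.sub_apply]
    have h1 : ((u * XX K) * YY K).coeff (FreeMonoid.ofList (Ltar i))
        = u.coeff (FreeMonoid.ofList (true :: true :: List.replicate n false)) := by
      rw [hL2, MonoidAlgebra.coeff_mul_single_eq_coeff_mul _ (fun a _ => cancel_right false _ a), mul_one,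
        hL1, MonoidAlgebra.coeff_mul_single_eq_coeff_mul _ (fun a _ => cancel_right true _ a), mul_one]
    have h2 : ((u * YY K) * XX K).coeff (FreeMonoid.ofList (Ltar i)) = 0 := by
      refine MonoidAlgebra.mul_single_apply_of_not_exists_mul _ _ (no_right true _ ?_)
      rw [hL2, List.getLast?_concat]; simp
    rw [h1, h2, sub_zero]
  have hB : ((XX K * YY K - YY K * XX K) * u).coeff (FreeMonoid.ofList (Ltar i)) = 0 := by
    rw [sub_mul, mul_assoc, mul_assoc, MonoidAlgebra.coeff_sub, Finsupp.sub_apply]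
    have h1 : (XX K * (YY K * u)).coeff (FreeMonoid.ofList (Ltar i)) = 0 := by
      rw [show (Ltar i) = true :: (true :: (List.replicate n false ++ [true, false])) from rfl,
        MonoidAlgebra.coeff_single_mul_eq_mul_coeff _ (fun a _ => cancel_left true _ a)]
      rw [MonoidAlgebra.single_mul_apply_of_not_exists_mul _ _ (no_left false _ (by simp)),
        mul_zero]
    have h2 : (YY K * (XX K * u)).coeff (FreeMonoid.ofList (Ltar i)) = 0 :=
      MonoidAlgebra.single_mul_apply_of_not_exists_mul _ _ (no_left false _ (by simp [Ltar]))
    rw [h1, h2, sub_zero]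
  have hu1 : u.coeff (FreeMonoid.ofList (true :: true :: List.replicate n false)) = 1 := by
    rw [hu, MonoidAlgebra.coeff_sub, Finsupp.sub_apply]
    have h1 : (XX K * C).coeff (FreeMonoid.ofList (true :: true :: List.replicate n false)) = 1 := by
      rw [MonoidAlgebra.coeff_single_mul_eq_mul_coeff _ (fun a _ => cancel_left true _ a), hC, coeff_inner, mul_one]
    have h2 : (C * XX K).coeff (FreeMonoid.ofList (true :: true :: List.replicate n false)) = 0 := by
      refine MonoidAlgebra.mul_single_apply_of_not_exists_mul _ _ (no_right true _ ?_)
      rw [show (true :: true :: List.replicate n false)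
          = (true :: true :: List.replicate i false) ++ [false] by
        rw [hn, List.replicate_succ']; simp]
      rw [List.getLast?_concat]; simp
    rw [h1, h2, sub_zero]
  rw [hvu, MonoidAlgebra.coeff_sub, Finsupp.sub_apply, hA, hB, hu1, sub_zero]

lemma coeff_v_ne (i j : ℕ) (h : j ≠ i) : (v K j).coeff (FreeMonoid.ofList (Ltar i)) = 0 := by
  by_contra h0
  have hmem : FreeMonoid.ofList (Ltar i) ∈ (v K j).coeff.support := Finsupp.mem_support_iff.2 h0
  have hlen := lenOK_v K j _ hmem
  rw [FreeMonoid.toList_ofList, Ltar_length] at hlen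
  omega



noncomputable def ev (wd : FreeMonoid Bool) : MonoidAlgebra K (FreeMonoid Bool) →ₗ[K] K :=
  { toFun := fun f => f.coeff wd, map_add' := fun _ _ => rfl, map_smul' := fun _ _ => rfl }

lemma ev_apply (wd : FreeMonoid Bool) (f : MonoidAlgebra K (FreeMonoid Bool)) :
    ev K wd f = f.coeff wd := rfl

end WiAux

/-- The elements `wᵢ = [[a, [a, b, …, b]], [a, b]]` (with `i ≥ 1` copies of `b` in the
inner iterated bracket) are linearly independent in the free Lie algebra on `a, b`. -/
theorem wi_linearIndependent (K : Type) [Field K] :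
    LinearIndependent K
      (fun i : ℕ =>
        ⁅⁅FreeLieAlgebra.of K true, innerBracket K (i + 1)⁆,
          ⁅FreeLieAlgebra.of K true, FreeLieAlgebra.of K false⁆⁆) := by
  classical
  rw [linearIndependent_iff']
  intro s g hsum j hj
  have h0 := congrArg (WiAux.φ K).toLinearMap hsum
  rw [map_sum, map_zero] at h0
  simp only [map_smul, LieHom.coe_toLinearMap] at h0
  have h1 : ∑ i ∈ s, g i • WiAux.v K i = 0 := h0
  have h2 := congrArg (WiAux.ev K (FreeMonoid.ofList (WiAux.Ltar j))) h1
  rw [map_sum, map_zero] at h2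
  simp only [map_smul, WiAux.ev_apply, smul_eq_mul] at h2
  have h3 : ∑ i ∈ s, g i * (WiAux.v K i).coeff (FreeMonoid.ofList (WiAux.Ltar j)) = g j := by
    rw [Finset.sum_eq_single_of_mem j hj]
    · rw [WiAux.coeff_v_self, mul_one]
    · intro i _ hij
      rw [WiAux.coeff_v_ne K j i hij, mul_zero]
  rw [h3] at h2
  exact h2
end
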